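/- Let ℓ ≥ 1 and k ≥ 2 and let i ∈ Fin k. Then the set S_i = {v : v 0 = i} is an independent set of ST^ℓ_k, and each vertex v ∈ S_i belongs to exactly (k−1)·ℓ dominating ℓ-sets with respect to S_i, i.e., there are exactly (k−1)·ℓ vertices w with w 0 ≠ i such that v ∈ N(w) ∩ S_i. -/
import Mathlib


/-- An ℓ-set permutation: a string of length `k * l` over the alphabet `Fin k`
in which every symbol occurs exactly `l` times. -/
abbrev LSetPerm (k l : ℕ) : Type :=
  {v : Fin (k * l) → Fin k // ∀ j : Fin k, (Finset.univ.filter fun x => v x = j).card = l}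

/-- The star ℓ-set transposition graph `ST^ℓ_k`: vertices are the ℓ-set permutations,
with `v` adjacent to `w` iff `w` is obtained from `v` by transposing the first entry
with an entry of differing value. -/
def STGraph (k l : ℕ) [NeZero (k * l)] : SimpleGraph (LSetPerm k l) :=
  SimpleGraph.fromRel fun v w =>
    ∃ h : Fin (k * l), h ≠ 0 ∧ v.1 h ≠ v.1 0 ∧ w.1 = v.1 ∘ (Equiv.swap 0 h)

lemma LSetPerm.comp_equiv {k l : ℕ} (v : LSetPerm k l) (e : Equiv.Perm (Fin (k * l))) :
    ∀ j : Fin k, (Finset.univ.filter fun x => (v.1 ∘ e) x = j).card = l := by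
  intro j
  have : (Finset.univ.filter fun x => (v.1 ∘ e) x = j) =
      (Finset.univ.filter fun x => v.1 x = j).map e.symm.toEmbedding := by
    ext x
    simp [Equiv.symm_apply_eq]
  rw [this, Finset.card_map, v.2 j]

/-- `S_i = {v : v 0 = i}` is an independent set of `ST^ℓ_k`, and each
vertex `v ∈ S_i` belongs to exactly `(k-1)·ℓ` dominating ℓ-sets with respect to `S_i`,
i.e. there are exactly `(k-1)·ℓ` vertices `w` with `w 0 ≠ i` adjacent to `v`. -/
theorem ST_Si_independent_and_count (k l : ℕ) (hl : 1 ≤ l) (hk : 2 ≤ k) (i : Fin k) :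
    letI : NeZero (k * l) := ⟨Nat.mul_ne_zero (by omega) (by omega)⟩
    (∀ v w : LSetPerm k l, v.1 0 = i → w.1 0 = i → ¬ (STGraph k l).Adj v w) ∧
    (∀ v : LSetPerm k l, v.1 0 = i →
      {w : LSetPerm k l | w.1 0 ≠ i ∧ (STGraph k l).Adj w v}.ncard = (k - 1) * l) := by
  letI : NeZero (k * l) := ⟨Nat.mul_ne_zero (by omega) (by omega)⟩
  constructor
  · rintro v w hv hw hadj
    rw [STGraph, SimpleGraph.fromRel_adj] at hadj
    obtain ⟨hne, ⟨h, h0, hval, heq⟩ | ⟨h, h0, hval, heq⟩⟩ := hadj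
    · have : w.1 0 = v.1 h := by
        rw [heq]; simp
      exact hval (by rw [← this, hw, ← hv])
    · have : v.1 0 = w.1 h := by
        rw [heq]; simp
      exact hval (by rw [← this, hv, ← hw])
  · intro v hv
    set S : Set (LSetPerm k l) :=
      {w : LSetPerm k l | w.1 0 ≠ i ∧ (STGraph k l).Adj w v} with hS
    set T : Set (Fin (k * l)) := {h | v.1 h ≠ v.1 0} with hT
    have hf : ∀ h ∈ T, (∀ j : Fin k,
        (Finset.univ.filter fun x => (v.1 ∘ Equiv.swap 0 h) x = j).card = l) :=
      fun h _ => LSetPerm.comp_equiv v (Equiv.swap 0 h)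
    have key : S = (fun h : T => (⟨v.1 ∘ Equiv.swap 0 h.1, hf h.1 h.2⟩ : LSetPerm k l)) '' Set.univ := by
      ext w
      constructor
      · rintro ⟨hw0, hadj⟩
        rw [STGraph, SimpleGraph.fromRel_adj] at hadj
        obtain ⟨hne, ⟨h, h0, hval, heq⟩ | ⟨h, h0, hval, heq⟩⟩ := hadj
        · -- v = w ∘ swap 0 h
          have hvh : v.1 h = w.1 0 := by rw [heq]; simp
          have hv0 : v.1 0 = w.1 h := by rw [heq]; simp
          have hmem : h ∈ T := by
            simp only [hT, Set.mem_setOf_eq, hvh, hv0]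
            exact fun e => hval e.symm
          refine ⟨⟨h, hmem⟩, Set.mem_univ _, ?_⟩
          apply Subtype.ext
          simp only
          rw [heq]
          funext x
          simp [Function.comp, Equiv.swap_apply_self]
        · -- w = v ∘ swap 0 h
          have hmem : h ∈ T := hval
          exact ⟨⟨h, hmem⟩, Set.mem_univ _, Subtype.ext heq.symm⟩
      · rintro ⟨⟨h, hmem⟩, -, rfl⟩
        have h0 : h ≠ 0 := fun e => hmem (by rw [e])
        have hw0 : v.1 (Equiv.swap 0 h 0) = v.1 h := by simp
        constructor
        · simp only [Set.mem_setOf_eq] at hmem ⊢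
          rw [Function.comp_apply, hw0, ← hv]
          exact hmem
        · rw [STGraph, SimpleGraph.fromRel_adj]
          constructor
          · intro e
            have := congrArg (fun u : LSetPerm k l => u.1 0) e
            simp only [Function.comp_apply, hw0] at this
            exact hmem this
          · right
            exact ⟨h, h0, hmem, rfl⟩
    have hinj : Set.InjOn (fun h : T => (⟨v.1 ∘ Equiv.swap 0 h.1, hf h.1 h.2⟩ : LSetPerm k l)) Set.univ := by
      rintro ⟨h, hh⟩ - ⟨h', hh'⟩ - e
      have h0 : h ≠ 0 := fun e' => hh (by rw [e'])
      have h0' : h' ≠ 0 := fun e' => hh' (by rw [e'])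
      apply Subtype.ext
      show h = h'
      by_contra hne
      have := congrArg (fun u : LSetPerm k l => u.1 h) e
      simp only [Function.comp_apply, Equiv.swap_apply_right] at this
      rw [Equiv.swap_apply_of_ne_of_ne h0 hne] at this
      exact hh this.symm
    rw [key, Set.ncard_image_of_injOn hinj, Set.ncard_univ, Nat.card_eq_fintype_card]
    have : Fintype.card T = (Finset.univ.filter fun h => v.1 h ≠ v.1 0).card := by
      rw [Fintype.card_subtype]
      rfl
    rw [this]
    have hsplit := Finset.card_filter_add_card_filter_not
      (s := (Finset.univ : Finset (Fin (k * l)))) (p := fun h => v.1 h = v.1 0)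
    have heqcard : (Finset.univ.filter fun h => v.1 h = v.1 0).card = l := v.2 (v.1 0)
    have huniv : (Finset.univ : Finset (Fin (k * l))).card = k * l := by simp
    have : (Finset.univ.filter fun h => ¬ v.1 h = v.1 0).card = k * l - l := by omega
    rw [this, Nat.sub_mul, one_mul]
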